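/- If a, b, n are positive integers with b ∈ {1, 2, 3} and n > 2, then the real n-th root of a^n + b^n is irrational. -/

import Mathlib

/-!
Write `m = max a b` and `c = min a b`. Since `c ≤ 3` and `c ≤ m`, the binomial expansion gives
`m ^ n < m ^ n + c ^ n < (m + 1) ^ n` for `n ≥ 3`, so `a ^ n + b ^ n` lies strictly between two
consecutive `n`-th powers. Its `n`-th root is therefore not an integer, and an `n`-th root of an
integer that is not an integer is irrational.
-/

theorem Nat.pow_add_pow_lt_add_one_pow {m b n : ℕ} (hbm : b ≤ m) (hb : b ≤ 3) (hn : 3 ≤ n) :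
    m ^ n + b ^ n < (m + 1) ^ n := by
  induction n, hn using Nat.le_induction with
  | base =>
    -- `(m + 1) ^ 3 - m ^ 3 = 3 m ^ 2 + 3 m + 1 > 3 m ^ 2 ≥ 3 b ^ 2 ≥ b ^ 3`
    have hb3 : b ^ 3 ≤ 3 * m ^ 2 := by
      calc b ^ 3 = b * b ^ 2 := by ring
        _ ≤ 3 * m ^ 2 := Nat.mul_le_mul hb (Nat.pow_le_pow_left hbm 2)
    nlinarith
  | succ n _ ih =>
    calc m ^ (n + 1) + b ^ (n + 1) = m ^ n * m + b ^ n * b := by rw [pow_succ, pow_succ]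
      _ ≤ m ^ n * (m + 1) + b ^ n * (m + 1) := by gcongr <;> omega
      _ = (m ^ n + b ^ n) * (m + 1) := by ring
      _ < (m + 1) ^ n * (m + 1) := Nat.mul_lt_mul_of_pos_right ih m.succ_pos
      _ = (m + 1) ^ (n + 1) := (pow_succ _ _).symm

theorem irrational_natCast_rpow_inv_of_lt_of_lt {N m n : ℕ} (hn : n ≠ 0) (hlow : m ^ n < N)
    (hhigh : N < (m + 1) ^ n) : Irrational ((N : ℝ) ^ (n : ℝ)⁻¹) := by
  have hpow : ((N : ℝ) ^ (n : ℝ)⁻¹) ^ n = ((N : ℤ) : ℝ) := by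
    rw [Real.rpow_inv_natCast_pow N.cast_nonneg hn, Int.cast_natCast]
  refine irrational_nrt_of_notint_nrt n N hpow ?_ (Nat.pos_of_ne_zero hn)
  rintro ⟨y, hy⟩
  have hy0 : (0 : ℝ) ≤ y := hy ▸ Real.rpow_nonneg N.cast_nonneg _
  lift y to ℕ using (by exact_mod_cast hy0)
  have hyN : y ^ n = N := by
    rw [hy] at hpow
    exact_mod_cast hpow
  have hmy : m < y := (Nat.pow_lt_pow_iff_left hn).1 (hyN ▸ hlow)
  have hym : y < m + 1 := (Nat.pow_lt_pow_iff_left hn).1 (hyN ▸ hhigh)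
  omega

theorem stmt_13 (a b n : ℕ) (ha : 0 < a) (hb : b = 1 ∨ b = 2 ∨ b = 3) (hn : 2 < n) :
    Irrational (((a : ℝ) ^ n + (b : ℝ) ^ n) ^ ((n : ℝ)⁻¹)) := by
  have hb0 : 0 < b := by omega
  have hb3 : b ≤ 3 := by omega
  have hn0 : n ≠ 0 := by omega
  rcases le_total b a with hba | hab
  · have hlow : a ^ n < a ^ n + b ^ n := Nat.lt_add_of_pos_right (pow_pos hb0 n)
    exact_mod_cast irrational_natCast_rpow_inv_of_lt_of_lt hn0 hlow
      (Nat.pow_add_pow_lt_add_one_pow hba hb3 hn)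
  · have hlow : b ^ n < b ^ n + a ^ n := Nat.lt_add_of_pos_right (pow_pos ha n)
    rw [add_comm]
    exact_mod_cast irrational_natCast_rpow_inv_of_lt_of_lt hn0 hlow
      (Nat.pow_add_pow_lt_add_one_pow hab (hab.trans hb3) hn)
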